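/- For every moment sequence s ∈ S_A one has the dimension formula D_s = m − γ_s, where D_s = dim F_s is the dimension of the face of s and γ_s = dim{f ∈ lin A : f vanishes on W(s)}. -/

import Mathlib

/-!
Write `A x = (a_1 x, …, a_m x)`. The moment cone is the conic hull of `A(X)` (Richter's
theorem): if `∫ A dμ` were not in the conic hull of `A(T)` for a set `T` carrying `μ`, separating
it from that hull inside `span A(T)` gives a functional `g ≥ 0` on `A(T)` with `∫ g ∘ A dμ ≤ 0`;
then `μ` is carried by `T ∩ {g ∘ A = 0}`, whose image spans a smaller space.

In these terms `x` is an atom of `s` exactly when `s - c • A x` is again a moment vector for some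
`c > 0`. Extremality of `F` puts every such `A x` into `span F`. Conversely, for `t ∈ F` the point
`s` lies strictly between `t` and some `r ∈ F`, so every generator occurring in a conic
representation of `t` occurs with positive weight in one of `s`, hence is the image of an atom.
So `span F = span A(W(s))`, and `γ_s` is the dimension of its dot-product orthogonal.
-/

open MeasureTheory Set Submodule Filter Topology

section ConicHull

variable {E : Type*} [AddCommGroup E] [Module ℝ E]

theorem PointedCone.span_hull (G : Set E) : span ℝ (hull ℝ G : Set E) = span ℝ G :=
  span_span_of_tower _ _ _

theorem IsExtreme.mem_span_of_sub_smul_mem {C : PointedCone ℝ E} {F : Set E}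
    (hF : IsExtreme ℝ (C : Set E) F) {s v : E} (hs : s ∈ F) (hv : v ∈ C) {c : ℝ} (hc : 0 < c)
    (hsv : s - c • v ∈ C) : v ∈ span ℝ F := by
  have hcv : (2 * c) • v ∈ F :=
    hF.left_mem_of_mem_openSegment (C.smul_mem (by positivity) hv) (C.smul_mem zero_le_two hsv)
      hs ⟨1 / 2, 1 / 2, by norm_num, by norm_num, by norm_num, by module⟩
  have := Submodule.smul_mem (span ℝ F) (2 * c)⁻¹ (subset_span hcv)
  rwa [inv_smul_smul₀ (by positivity)] at this

theorem PointedCone.mem_span_of_sub_smul_mem_hull {G : Set E} {s t : E} (ht : t ∈ hull ℝ G)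
    {c : ℝ} (hc : 0 < c) (hst : s - c • t ∈ hull ℝ G) :
    t ∈ span ℝ {v ∈ G | ∃ c : ℝ, 0 < c ∧ s - c • v ∈ hull ℝ G} := by
  induction ht using Submodule.span_induction generalizing c with
  | mem v hv => exact Submodule.subset_span ⟨hv, c, hc, hst⟩
  | zero => exact zero_mem _
  | add x y hx hy ihx ihy =>
    refine add_mem (ihx hc ?_) (ihy hc ?_)
    · convert add_mem hst (smul_mem _ hc.le hy) using 1; module
    · convert add_mem hst (smul_mem _ hc.le hx) using 1; module
  | smul b x hx ih =>
    obtain ⟨b, hb⟩ := b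
    rcases hb.eq_or_lt with rfl | hb
    · simp
    · exact Submodule.smul_mem _ b (ih (mul_pos hc hb) (by simpa [smul_smul] using hst))

end ConicHull

section IntrinsicInterior

variable {E : Type*} [NormedAddCommGroup E] [NormedSpace ℝ E]

theorem eventually_add_smul_mem_of_mem_intrinsicInterior {F : Set E} {s v : E}
    (hs : s ∈ intrinsicInterior ℝ F) (hv : v ∈ (affineSpan ℝ F).direction) :
    ∀ᶠ ε in 𝓝 (0 : ℝ), s + ε • v ∈ F := by
  obtain ⟨y, hy, rfl⟩ := hs
  let c : ℝ → affineSpan ℝ F := fun ε =>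
    ⟨y + ε • v, by
      simpa [add_comm] using AffineSubspace.vadd_mem_of_mem_direction (smul_mem _ ε hv) y.2⟩
  have hc0 : c 0 = y := by ext; simp [c]
  have := (show Continuous c by fun_prop).continuousAt.preimage_mem_nhds
    (hc0 ▸ isOpen_interior.mem_nhds hy)
  exact mem_of_superset this fun ε hε => (interior_subset hε : c ε ∈ Subtype.val ⁻¹' F)

theorem PointedCone.span_eq_span_of_isExtreme {G F : Set E} (hF : IsExtreme ℝ (hull ℝ G : Set E) F)
    {s : E} (hs : s ∈ intrinsicInterior ℝ F) :
    span ℝ F = span ℝ {v ∈ G | ∃ c : ℝ, 0 < c ∧ s - c • v ∈ hull ℝ G} := by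
  have hsF : s ∈ F := intrinsicInterior_subset hs
  refine le_antisymm (span_le.2 fun t ht => ?_) (span_le.2 fun v ⟨hv, c, hc, hsv⟩ =>
    hF.mem_span_of_sub_smul_mem hsF (subset_hull hv) hc hsv)
  have hdir : s - t ∈ (affineSpan ℝ F).direction :=
    AffineSubspace.vsub_mem_direction (subset_affineSpan ℝ F hsF) (subset_affineSpan ℝ F ht)
  obtain ⟨ε, hεF, hε : 0 < ε⟩ := ((eventually_add_smul_mem_of_mem_intrinsicInterior hs hdir)
    |>.filter_mono nhdsWithin_le_nhds |>.and (self_mem_nhdsWithin (s := Ioi 0))).exists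
  refine mem_span_of_sub_smul_mem_hull (hF.subset ht) (c := ε / (1 + ε)) (by positivity) ?_
  convert (hull ℝ G).smul_mem (inv_pos.2 (by positivity : 0 < 1 + ε)).le (hF.subset hεF) using 1
  rw [eq_inv_smul_iff₀ (by positivity), smul_sub, smul_smul, mul_div_cancel₀ _ (by positivity)]
  module

end IntrinsicInterior

section Separation

variable {E : Type*} [NormedAddCommGroup E] [NormedSpace ℝ E] [FiniteDimensional ℝ E]

theorem PointedCone.exists_dual_nonneg_of_notMem_of_span_eq_top {C : PointedCone ℝ E}
    (hC : span ℝ (C : Set E) = ⊤) {s : E} (hs : s ∉ C) :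
    ∃ f : E →L[ℝ] ℝ, f ≠ 0 ∧ (∀ x ∈ C, 0 ≤ f x) ∧ f s ≤ 0 := by
  have hint : (interior (C : Set E)).Nonempty := by
    rw [C.convex.interior_nonempty_iff_affineSpan_eq_top,
      AffineSubspace.affineSpan_eq_top_iff_vectorSpan_eq_top_of_nonempty ℝ E E ⟨0, C.zero_mem⟩,
      vectorSpan_eq_span_vsub_set_right ℝ C.zero_mem]
    simpa using hC
  obtain ⟨f, hf⟩ := geometric_hahn_banach_open_point C.convex.interior isOpen_interior
    fun h => hs (interior_subset h)
  have hle : ∀ x ∈ C, f x ≤ f s := by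
    have : closure (interior (C : Set E)) ⊆ {x | f x ≤ f s} :=
      closure_minimal (fun x hx => (hf x hx).le) (isClosed_le f.continuous continuous_const)
    rw [C.convex.closure_interior_eq_closure_of_nonempty_interior hint] at this
    exact fun x hx => this (subset_closure hx)
  have hs0 : 0 ≤ f s := by simpa using hle 0 C.zero_mem
  have hnonpos : ∀ x ∈ C, f x ≤ 0 := by
    intro x hx
    by_contra! hpos
    have := hle _ (C.smul_mem (div_pos (by linarith : 0 < f s + 1) hpos).le hx)
    rw [f.map_smul, smul_eq_mul, div_mul_cancel₀ _ hpos.ne'] at this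
    linarith
  obtain ⟨b, hb⟩ := hint
  refine ⟨-f, fun h => ?_, fun x hx => by simpa using hnonpos x hx, by simpa using hs0⟩
  simpa [neg_eq_zero.1 h] using hf b hb

theorem PointedCone.exists_dual_nonneg_of_notMem {C : PointedCone ℝ E} {s : E}
    (hsC : s ∈ span ℝ (C : Set E)) (hs : s ∉ C) :
    ∃ g : E →L[ℝ] ℝ, (∀ x ∈ C, 0 ≤ g x) ∧ g s ≤ 0 ∧
      ¬ span ℝ (C : Set E) ≤ LinearMap.ker (g : E →ₗ[ℝ] ℝ) := by
  set V := span ℝ (C : Set E)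
  obtain ⟨f, hf0, hfC, hfs⟩ := exists_dual_nonneg_of_notMem_of_span_eq_top
    (C := C.comap V.subtype) (by rw [coe_comap]; exact span_span_coe_preimage) (s := ⟨s, hsC⟩) hs
  obtain ⟨g, hg⟩ := LinearMap.exists_extend (f : V →ₗ[ℝ] ℝ)
  have hgV : ∀ v : V, g v = f v := fun v => LinearMap.congr_fun hg v
  refine ⟨LinearMap.toContinuousLinearMap g, fun x hx => ?_, ?_, fun hle => hf0 ?_⟩
  · simpa [hgV ⟨x, Submodule.subset_span hx⟩] using hfC ⟨x, Submodule.subset_span hx⟩ hx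
  · simpa [hgV ⟨s, hsC⟩] using hfs
  · ext v
    simpa [hgV v] using hle v.2

end Separation

section Moments

variable {X E : Type*} [MeasurableSpace X] [NormedAddCommGroup E] [NormedSpace ℝ E]

def momentCone (A : X → E) : PointedCone ℝ E where
  carrier := {s | ∃ μ : Measure X, Integrable A μ ∧ ∫ x, A x ∂μ = s}
  add_mem' := by
    rintro _ _ ⟨μ, hμ, rfl⟩ ⟨ν, hν, rfl⟩
    exact ⟨μ + ν, hμ.add_measure hν, integral_add_measure hμ hν⟩
  zero_mem' := ⟨0, integrable_zero_measure, integral_zero_measure _⟩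
  smul_mem' := by
    rintro ⟨c, hc⟩ _ ⟨μ, hμ, rfl⟩
    exact ⟨ENNReal.ofReal c • μ, hμ.smul_measure ENNReal.ofReal_ne_top, by
      rw [integral_smul_measure, ENNReal.toReal_ofReal hc]; rfl⟩

def momentAtoms (A : X → E) (s : E) : Set X :=
  {x | ∃ μ : Measure X, Integrable A μ ∧ ∫ y, A y ∂μ = s ∧ 0 < μ (A ⁻¹' {A x})}

theorem integral_mem_of_ae_mem [FiniteDimensional ℝ E] {A : X → E} {μ : Measure X}
    (hA : Integrable A μ) {V : Submodule ℝ E} (hV : ∀ᵐ x ∂μ, A x ∈ V) : ∫ x, A x ∂μ ∈ V := by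
  by_contra h
  obtain ⟨f, hf, hVf⟩ := V.exists_le_ker_of_notMem h
  apply hf
  rw [← LinearMap.coe_toContinuousLinearMap' f,
    ← (LinearMap.toContinuousLinearMap f).integral_comp_comm hA]
  exact integral_eq_zero_of_ae (hV.mono fun x hx => hVf hx)

theorem integral_mem_hull_image [FiniteDimensional ℝ E] {A : X → E} {μ : Measure X}
    (hA : Integrable A μ) {T : Set X} (hT : ∀ᵐ x ∂μ, x ∈ T) :
    ∫ x, A x ∂μ ∈ PointedCone.hull ℝ (A '' T) := by
  induction hd : Module.finrank ℝ (span ℝ (A '' T)) using Nat.strong_induction_on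
    generalizing T with
  | _ d ih =>
    by_contra hs
    have hsV : ∫ x, A x ∂μ ∈ span ℝ (PointedCone.hull ℝ (A '' T) : Set E) := by
      rw [PointedCone.span_hull]
      exact integral_mem_of_ae_mem hA (hT.mono fun x hx => subset_span (mem_image_of_mem A hx))
    obtain ⟨g, hgC, hgs, hgV⟩ := PointedCone.exists_dual_nonneg_of_notMem hsV hs
    rw [PointedCone.span_hull] at hgV
    have hgA : ∀ᵐ x ∂μ, 0 ≤ g (A x) :=
      hT.mono fun x hx => hgC _ (PointedCone.subset_hull (mem_image_of_mem A hx))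
    have hgA0 : ∀ᵐ x ∂μ, g (A x) = 0 := by
      refine (integral_eq_zero_iff_of_nonneg_ae hgA (g.integrable_comp hA)).1
        (le_antisymm ?_ (integral_nonneg_of_ae hgA))
      rwa [g.integral_comp_comm hA]
    have hlt : Module.finrank ℝ (span ℝ (A '' (T ∩ {x | g (A x) = 0}))) < d := by
      rw [← hd]
      refine Submodule.finrank_lt_finrank_of_lt
        (lt_of_le_of_lt (b := span ℝ (A '' T) ⊓ LinearMap.ker (g : E →ₗ[ℝ] ℝ)) ?_
          (inf_lt_left.2 hgV))
      rw [span_le]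
      rintro _ ⟨x, ⟨hxT, hx0⟩, rfl⟩
      exact ⟨subset_span (mem_image_of_mem A hxT), hx0⟩
    exact hs (span_mono (image_mono inter_subset_left) (ih _ hlt (hT.and hgA0) rfl))

section Borel

variable [FiniteDimensional ℝ E] [MeasurableSpace E] [BorelSpace E] {A : X → E}

theorem momentCone_eq_hull (hA : Measurable A) : momentCone A = PointedCone.hull ℝ (range A) := by
  refine le_antisymm ?_ (span_le.2 ?_)
  · rintro _ ⟨μ, hμ, rfl⟩
    rw [← image_univ]
    exact integral_mem_hull_image hμ (ae_of_all _ mem_univ)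
  · rintro _ ⟨x, rfl⟩
    exact ⟨Measure.dirac x, integrable_dirac' hA.stronglyMeasurable enorm_lt_top,
      integral_dirac' _ _ hA.stronglyMeasurable⟩

theorem mem_momentAtoms_iff (hA : Measurable A) {s : E} {x : X} :
    x ∈ momentAtoms A s ↔ ∃ c : ℝ, 0 < c ∧ s - c • A x ∈ momentCone A := by
  have hL : MeasurableSet (A ⁻¹' {A x}) := hA (measurableSet_singleton _)
  constructor
  · rintro ⟨μ, hμ, rfl, hpos⟩
    by_cases h0 : A x = 0
    · exact ⟨1, one_pos, μ, hμ, by simp [h0]⟩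
    have hfin : μ (A ⁻¹' {A x}) < ⊤ := (hμ.measure_norm_ge_lt_top (norm_pos_iff.2 h0)).trans_le'
      (measure_mono fun y (hy : A y = A x) => by simp [hy])
    refine ⟨μ.real (A ⁻¹' {A x}), ENNReal.toReal_pos hpos.ne' hfin.ne,
      μ.restrict (A ⁻¹' {A x})ᶜ, hμ.restrict, ?_⟩
    have hL' : ∫ y in A ⁻¹' {A x}, A y ∂μ = μ.real (A ⁻¹' {A x}) • A x := by
      rw [setIntegral_congr_fun hL fun y (hy : A y = A x) => hy, setIntegral_const]
    rw [← integral_add_compl hL hμ, hL', add_sub_cancel_left]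
  · rintro ⟨c, hc, ν, hν, hνs⟩
    have hδ : Integrable A (ENNReal.ofReal c • Measure.dirac x) :=
      (integrable_dirac' hA.stronglyMeasurable enorm_lt_top).smul_measure ENNReal.ofReal_ne_top
    refine ⟨ν + ENNReal.ofReal c • Measure.dirac x, hν.add_measure hδ, ?_, ?_⟩
    · rw [integral_add_measure hν hδ, integral_smul_measure,
        integral_dirac' _ _ hA.stronglyMeasurable, ENNReal.toReal_ofReal hc.le, hνs, sub_add_cancel]
    · simp [Measure.dirac_apply_of_mem (show x ∈ A ⁻¹' {A x} from rfl), hc]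

theorem image_momentAtoms (hA : Measurable A) (s : E) :
    A '' momentAtoms A s = {v ∈ range A | ∃ c : ℝ, 0 < c ∧ s - c • v ∈ momentCone A} := by
  ext v
  constructor
  · rintro ⟨x, hx, rfl⟩
    exact ⟨mem_range_self x, (mem_momentAtoms_iff hA).1 hx⟩
  · rintro ⟨⟨x, rfl⟩, hx⟩
    exact ⟨x, (mem_momentAtoms_iff hA).2 hx, rfl⟩

theorem span_eq_span_image_momentAtoms (hA : Measurable A) {F : Set E}
    (hF : IsExtreme ℝ (momentCone A : Set E) F) {s : E} (hs : s ∈ intrinsicInterior ℝ F) :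
    span ℝ F = span ℝ (A '' momentAtoms A s) := by
  rw [image_momentAtoms hA, momentCone_eq_hull hA] at *
  exact PointedCone.span_eq_span_of_isExtreme hF hs

end Borel

theorem integrable_pi_and_integral_eq_iff {ι : Type*} [Fintype ι] {a : ι → X → ℝ}
    {μ : Measure X} {s : ι → ℝ} :
    (Integrable (fun x i => a i x) μ ∧ ∫ x, (fun i => a i x) ∂μ = s) ↔
      (∀ i, Integrable (a i) μ) ∧ ∀ i, s i = ∫ x, a i x ∂μ := by
  rw [integrable_pi_iff, funext_iff]
  refine and_congr_right fun hint => forall_congr' fun i => ?_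
  rw [eval_integral hint, eq_comm]

end Moments

theorem finrank_span_setOf_dotProduct_eq_zero {ι K : Type*} [Fintype ι] [Field K]
    (S : Set (ι → K)) :
    Module.finrank K (span K {w : ι → K | ∀ v ∈ S, w ⬝ᵥ v = 0}) =
      Fintype.card ι - Module.finrank K (span K S) := by
  classical
  let B : LinearMap.BilinForm K (ι → K) := dotProductBilin K K
  have hB : B.Nondegenerate :=
    ⟨fun w hw => funext fun i => by simpa [B] using hw (Pi.single i 1),
      fun w hw => funext fun i => by simpa [B] using hw (Pi.single i 1)⟩
  have hS : {w | ∀ v ∈ S, w ⬝ᵥ v = 0} = (B.orthogonal (span K S) : Set (ι → K)) := by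
    ext w
    simp only [Set.mem_ofPred_eq, SetLike.mem_coe, LinearMap.BilinForm.mem_orthogonal_iff,
      B, dotProductBilin_apply_apply]
    refine ⟨fun h v hv => ?_, fun h v hv => (dotProduct_comm _ _).trans (h v (subset_span hv))⟩
    induction hv using span_induction with
    | mem v hv => exact (dotProduct_comm _ _).trans (h v hv)
    | zero => exact zero_dotProduct w
    | add x y _ _ hx hy => rw [add_dotProduct, hx, hy, add_zero]
    | smul c x _ hx => rw [smul_dotProduct, hx, smul_zero]
  rw [hS, span_eq, LinearMap.BilinForm.finrank_orthogonal hB, Module.finrank_fintype_fun_eq_card]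

theorem face_dimension_formula_general {X : Type*} [MeasurableSpace X] {m : ℕ}
    (a : Fin m → X → ℝ) (ha : ∀ i, Measurable (a i)) :
    let S : Set (Fin m → ℝ) := {s | ∃ μ : Measure X,
      (∀ i, Integrable (a i) μ) ∧ ∀ i, s i = ∫ x, a i x ∂μ}
    ∀ (s : Fin m → ℝ), s ∈ S →
    ∀ (F : Set (Fin m → ℝ)), IsExtreme ℝ S F → s ∈ intrinsicInterior ℝ F →
    let W : Set X := {x | ∃ μ : Measure X, (∀ i, Integrable (a i) μ) ∧
      (∀ i, s i = ∫ y, a i y ∂μ) ∧ 0 < μ {y | ∀ i, a i y = a i x}}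
    Module.finrank ℝ (Submodule.span ℝ F) =
      m - Module.finrank ℝ (Submodule.span ℝ
        {pc : Fin m → ℝ | ∀ x ∈ W, ∑ i, pc i * a i x = 0}) := by
  intro S s _ F hF hs W
  set A : X → Fin m → ℝ := fun x i => a i x
  have hS : S = momentCone A :=
    Set.ext fun t => exists_congr fun μ => integrable_pi_and_integral_eq_iff.symm
  have hW : W = momentAtoms A s := by
    ext x
    refine exists_congr fun μ => ?_
    have hlevel : {y | ∀ i, a i y = a i x} = A ⁻¹' {A x} := by ext; simp [A, funext_iff]
    rw [hlevel, ← and_assoc, ← integrable_pi_and_integral_eq_iff, and_assoc]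
  have hΓ : {pc : Fin m → ℝ | ∀ x ∈ W, ∑ i, pc i * a i x = 0} =
      {pc | ∀ v ∈ A '' W, pc ⬝ᵥ v = 0} := by
    simp [dotProduct, A]
  rw [hΓ, finrank_span_setOf_dotProduct_eq_zero, Fintype.card_fin, hW,
    span_eq_span_image_momentAtoms (measurable_pi_lambda A ha) (hS ▸ hF) hs,
    Nat.sub_sub_self (by simpa using (span ℝ (A '' momentAtoms A s)).finrank_le)]

/-- Dimension formula: for every moment sequence `s ∈ S_A` one has
`D_s = m - γ_s`, where `D_s = dim F_s` is the dimension of the face of `s` and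
`γ_s` is the dimension of the space of functions in `lin A` vanishing on the
set of atoms `W(s)`. -/
theorem face_dimension_formula {X : Type*} [MeasurableSpace X] {m : ℕ}
    (a : Fin m → X → ℝ) (ha : ∀ i, Measurable (a i))
    (hindep : LinearIndependent ℝ a) :
    let S : Set (Fin m → ℝ) := {s | ∃ μ : Measure X,
      (∀ i, Integrable (a i) μ) ∧ ∀ i, s i = ∫ x, a i x ∂μ}
    ∀ (s : Fin m → ℝ), s ∈ S →
    ∀ (F : Set (Fin m → ℝ)), IsExtreme ℝ S F → s ∈ intrinsicInterior ℝ F →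
    let W : Set X := {x | ∃ μ : Measure X, (∀ i, Integrable (a i) μ) ∧
      (∀ i, s i = ∫ y, a i y ∂μ) ∧ 0 < μ {y | ∀ i, a i y = a i x}}
    Module.finrank ℝ (Submodule.span ℝ F) =
      m - Module.finrank ℝ (Submodule.span ℝ
        {pc : Fin m → ℝ | ∀ x ∈ W, ∑ i, pc i * a i x = 0}) :=
  face_dimension_formula_general a ha
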